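/- arXiv:1712.04387 — 3 statements merged into one kernel-verified Lean document; each statement's English description precedes it below -/
import Mathlib

section
/- Let H_∞ be an infinite upper Hessenberg matrix defining a bounded operator on ℓ² with ‖H_∞‖ ≤ C, let H_n be its leading n×n submatrix, and let φ(t) = exp(tH_∞)e_1 be the solution of the infinite ODE φ' = H_∞ φ, φ(0) = e_1. Then the truncation error ε_n(t) := [I_n, 0]exp(tH_∞)e_1 − exp(tH_n)e_1 satisfies ‖ε_n(t)‖₂ ≤ 2 R_n(tC) ≤ 2(tC)^n e^{tC}/n!, where R_n(z) = Σ_{ℓ≥n} z^ℓ/ℓ!, for all t ≥ 0. In particular, the approximation converges superlinearly as n → ∞ for fixed t. -/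
open scoped Matrix

/-- Taylor remainder of the exponential: `R_n(z) = Σ_{ℓ=n}^∞ z^ℓ/ℓ!`. -/
noncomputable def expRemainder (n : ℕ) (z : ℝ) : ℝ :=
  ∑' ℓ : ℕ, z ^ (n + ℓ) / (n + ℓ).factorial

lemma remainder_summable (n : ℕ) (z : ℝ) :
    Summable (fun ℓ : ℕ => z ^ (n + ℓ) / (n + ℓ).factorial) := by
  have h := (summable_nat_add_iff (f := fun m : ℕ => z ^ m / m.factorial) n).2
    (Real.summable_pow_div_factorial z)
  simpa [add_comm] using h

lemma exp_eq_tsum_real (z : ℝ) : Real.exp z = ∑' ℓ : ℕ, z ^ ℓ / ℓ.factorial := by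
  rw [Real.exp_eq_exp_ℝ, NormedSpace.exp_eq_tsum_div]

lemma remainder_le (n : ℕ) (z : ℝ) (hz : 0 ≤ z) :
    expRemainder n z ≤ z ^ n / n.factorial * Real.exp z := by
  have hsum := Real.summable_pow_div_factorial z
  rw [exp_eq_tsum_real, ← tsum_mul_left]
  refine Summable.tsum_le_tsum (fun ℓ => ?_) (remainder_summable n z) (hsum.mul_left _)
  have hfac : (n.factorial * ℓ.factorial : ℝ) ≤ (n + ℓ).factorial := by
    exact_mod_cast Nat.le_of_dvd (n + ℓ).factorial_pos
      (Nat.factorial_mul_factorial_dvd_factorial_add n ℓ)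
  have h1 : z ^ (n + ℓ) / (n + ℓ).factorial ≤ z ^ (n + ℓ) / (n.factorial * ℓ.factorial) :=
    div_le_div_of_nonneg_left (pow_nonneg hz _) (by positivity) hfac
  calc z ^ (n + ℓ) / (n + ℓ).factorial ≤ z ^ (n + ℓ) / (n.factorial * ℓ.factorial) := h1
    _ = z ^ n / n.factorial * (z ^ ℓ / ℓ.factorial) := by rw [pow_add]; ring

lemma lp_hasSum_sq (x : lp (fun _ : ℕ => ℂ) 2) :
    HasSum (fun i => ‖x i‖ ^ (2:ℝ)) (‖x‖ ^ (2:ℝ)) := by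
  have := lp.hasSum_norm (p := 2) (E := fun _ : ℕ => ℂ) (by norm_num) x
  simpa using this

lemma projE_norm_le (n : ℕ) (x : lp (fun _ : ℕ => ℂ) 2) :
    ‖(WithLp.equiv 2 (Fin n → ℂ)).symm (fun j : Fin n => x j)‖ ≤ ‖x‖ := by
  rw [EuclideanSpace.norm_eq]
  have h := lp_hasSum_sq x
  have hle : (∑ j : Fin n, ‖x (j:ℕ)‖ ^ 2) ≤ ‖x‖ ^ (2:ℝ) := by
    have := sum_le_hasSum (Finset.range n) (fun i _ => by positivity) h
    have heq : (∑ j : Fin n, ‖x (j:ℕ)‖ ^ 2) = ∑ i ∈ Finset.range n, ‖x i‖ ^ (2:ℝ) := by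
      rw [Fin.sum_univ_eq_sum_range (fun i => ‖x i‖ ^ 2)]
      refine Finset.sum_congr rfl fun i _ => ?_
      rw [← Real.rpow_natCast ‖x i‖ 2]; norm_num
    rw [heq]; exact this
  have h2 : ‖x‖ ^ (2:ℝ) = ‖x‖ ^ 2 := by
    rw [← Real.rpow_natCast ‖x‖ 2]; norm_num
  calc Real.sqrt (∑ j : Fin n, ‖(WithLp.equiv 2 (Fin n → ℂ)).symm (fun j : Fin n => x j) j‖ ^ 2)
      = Real.sqrt (∑ j : Fin n, ‖x (j:ℕ)‖ ^ 2) := rfl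
    _ ≤ Real.sqrt (‖x‖ ^ 2) := Real.sqrt_le_sqrt (by rw [← h2]; exact hle)
    _ = ‖x‖ := Real.sqrt_sq (norm_nonneg x)

lemma euclid_coord_le {n : ℕ} (x : EuclideanSpace ℂ (Fin n)) (j : Fin n) :
    ‖x j‖ ≤ ‖x‖ := by
  rw [EuclideanSpace.norm_eq]
  have : ‖x j‖ ^ 2 ≤ ∑ k : Fin n, ‖x k‖ ^ 2 :=
    Finset.single_le_sum (f := fun k => ‖x k‖ ^ 2) (fun k _ => by positivity)
      (Finset.mem_univ j)
  calc ‖x j‖ = Real.sqrt (‖x j‖ ^ 2) := (Real.sqrt_sq (norm_nonneg _)).symm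
    _ ≤ _ := Real.sqrt_le_sqrt this

lemma lp_rep (v : lp (fun _ : ℕ => ℂ) 2) (m : ℕ) (hv : ∀ i, m < i → v i = 0) :
    v = ∑ k ∈ Finset.range (m+1), (v k) • lp.single 2 k (1:ℂ) := by
  apply lp.ext
  funext i
  rw [lp.coeFn_sum]
  simp only [Finset.sum_apply, Pi.smul_apply, lp.coeFn_smul]
  simp only [lp.single_apply, smul_eq_mul]
  by_cases hi : i < m + 1
  · rw [Finset.sum_eq_single i]
    · simp
    · intro k _ hk; simp [Pi.single_apply, Ne.symm hk]
    · intro h; exact absurd (Finset.mem_range.2 hi) h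
  · rw [Finset.sum_eq_zero, hv i (by omega)]
    intro k hk
    have : i ≠ k := by have := Finset.mem_range.1 hk; omega
    simp [Pi.single_apply, this]

lemma apply_coord (T : lp (fun _ : ℕ => ℂ) 2 →L[ℂ] lp (fun _ : ℕ => ℂ) 2)
    (v : lp (fun _ : ℕ => ℂ) 2) (m : ℕ) (hv : ∀ i, m < i → v i = 0) (j : ℕ) :
    (T v) j = ∑ k ∈ Finset.range (m+1), v k * (T (lp.single 2 k 1)) j := by
  conv_lhs => rw [lp_rep v m hv]
  rw [map_sum]
  simp only [map_smul]
  rw [lp.coeFn_sum]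
  simp only [Finset.sum_apply]
  refine Finset.sum_congr rfl fun k _ => ?_
  rw [lp.coeFn_smul]
  simp

lemma hess_key (T : lp (fun _ : ℕ => ℂ) 2 →L[ℂ] lp (fun _ : ℕ => ℂ) 2)
    (hHess : ∀ j k : ℕ, j > k + 1 → (T (lp.single 2 k 1)) j = 0)
    (n : ℕ) (Hn : Matrix (Fin n) (Fin n) ℂ)
    (hHn : ∀ j k : Fin n, Hn j k = (T (lp.single 2 (k : ℕ) 1)) (j : ℕ)) :
    ∀ ℓ : ℕ, (∀ j, ℓ < j → ((T ^ ℓ) (lp.single 2 0 1)) j = 0) ∧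
      (ℓ ≤ n → ∀ j : Fin n, ((T ^ ℓ) (lp.single 2 0 1)) (j : ℕ) =
        ((Hn ^ ℓ) *ᵥ (fun k : Fin n => if (k : ℕ) = 0 then 1 else 0)) j) := by
  intro ℓ
  induction ℓ with
  | zero =>
    constructor
    · intro j hj
      simp only [pow_zero, ContinuousLinearMap.one_apply]
      rw [lp.single_apply, Pi.single_apply, if_neg (by omega)]
    · intro _ j
      simp only [pow_zero, ContinuousLinearMap.one_apply, Matrix.one_mulVec]
      rw [lp.single_apply]
      by_cases h : (j:ℕ) = 0 <;> simp [h]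
  | succ ℓ ih =>
    obtain ⟨hsupp, hagree⟩ := ih
    have hTw : ∀ j : ℕ, ((T ^ (ℓ+1)) (lp.single 2 0 1)) j =
        ∑ k ∈ Finset.range (ℓ+1), ((T ^ ℓ) (lp.single 2 0 1)) k * (T (lp.single 2 k 1)) j := by
      intro j
      rw [pow_succ' T ℓ, ContinuousLinearMap.mul_apply]
      exact apply_coord T _ ℓ (fun i hi => hsupp i hi) j
    constructor
    · intro j hj
      rw [hTw j]
      refine Finset.sum_eq_zero fun k hk => ?_
      have : j > k + 1 := by have := Finset.mem_range.1 hk; omega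
      rw [hHess j k this, mul_zero]
    · intro hn j
      rw [hTw j]
      have hrhs : ((Hn ^ (ℓ+1)) *ᵥ (fun k : Fin n => if (k : ℕ) = 0 then 1 else 0)) j =
          ∑ k : Fin n, (T (lp.single 2 (k:ℕ) 1)) (j:ℕ) * ((T ^ ℓ) (lp.single 2 0 1)) (k:ℕ) := by
        set y := (Hn ^ ℓ) *ᵥ (fun k : Fin n => if (k : ℕ) = 0 then 1 else 0) with hy
        rw [pow_succ' Hn ℓ, ← Matrix.mulVec_mulVec, ← hy]
        simp only [Matrix.mulVec, dotProduct]
        refine Finset.sum_congr rfl fun k _ => ?_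
        rw [hHn j k, ← hagree (by omega) k]
      rw [hrhs]
      have := Fin.sum_univ_eq_sum_range
        (fun m => (T (lp.single 2 m 1)) (j:ℕ) * ((T ^ ℓ) (lp.single 2 0 1)) m) n
      rw [this]
      rw [← Finset.sum_subset (Finset.range_subset_range.2 hn) (fun x _ hx2 => by
        have hx : ℓ < x := by
          simpa using Nat.lt_of_succ_le (Nat.not_lt.1 (fun h => hx2 (Finset.mem_range.2 h)))
        rw [hsupp x hx, mul_zero])]
      exact Finset.sum_congr rfl fun k _ => mul_comm _ _

lemma compress_le (T : lp (fun _ : ℕ => ℂ) 2 →L[ℂ] lp (fun _ : ℕ => ℂ) 2)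
    (C : ℝ) (hC : ‖T‖ ≤ C)
    (n : ℕ) (Hn : Matrix (Fin n) (Fin n) ℂ)
    (hHn : ∀ j k : Fin n, Hn j k = (T (lp.single 2 (k : ℕ) 1)) (j : ℕ))
    (x : Fin n → ℂ) :
    ‖(WithLp.equiv 2 (Fin n → ℂ)).symm (Hn *ᵥ x)‖ ≤
      C * ‖(WithLp.equiv 2 (Fin n → ℂ)).symm x‖ := by
  classical
  set xe : ℕ → ℂ := fun m => if h : m < n then x ⟨m, h⟩ else 0 with hxe
  set vx : lp (fun _ : ℕ => ℂ) 2 := ∑ k ∈ Finset.range n, lp.single 2 k (xe k) with hvx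
  have hsingle : ∀ k : ℕ,
      lp.single 2 k (xe k) = xe k • (lp.single 2 k (1:ℂ) : lp (fun _ : ℕ => ℂ) 2) := by
    intro k
    have h := lp.single_smul (𝕜 := ℂ) (E := fun _ : ℕ => ℂ) 2 k (xe k) (1:ℂ)
    rw [smul_eq_mul, mul_one] at h; exact h
  have hTvx : ∀ j : Fin n, (T vx) (j : ℕ) = (Hn *ᵥ x) j := by
    intro j
    have hT : T vx = ∑ k ∈ Finset.range n, xe k • T (lp.single 2 k (1:ℂ)) := by
      rw [hvx, map_sum]
      exact Finset.sum_congr rfl fun k _ => by rw [hsingle k, map_smul]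
    rw [hT, lp.coeFn_sum]
    simp only [Finset.sum_apply, Pi.smul_apply, lp.coeFn_smul, smul_eq_mul]
    have hconv := Fin.sum_univ_eq_sum_range
      (fun m => xe m * (T (lp.single 2 m 1)) (j : ℕ)) n
    rw [← hconv]
    simp only [Matrix.mulVec, dotProduct]
    refine Finset.sum_congr rfl fun k _ => ?_
    rw [hHn j k, hxe]
    simp [mul_comm]
  have hpow2 : ∀ a : ℝ, a ^ (2:ℝ) = a ^ (2:ℕ) := by
    intro a
    rw [← Real.rpow_natCast a 2]; norm_num
  have hnorm : ‖vx‖ = ‖(WithLp.equiv 2 (Fin n → ℂ)).symm x‖ := by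
    have h2 : (0:ℝ) < (2 : ENNReal).toReal := by norm_num
    have hs := lp.norm_sum_single (E := fun _ : ℕ => ℂ) h2 xe (Finset.range n)
    have hvsq : ‖vx‖ ^ (2:ℕ) = ∑ i ∈ Finset.range n, ‖xe i‖ ^ (2:ℕ) := by
      have : (2 : ENNReal).toReal = (2:ℝ) := by norm_num
      rw [this] at hs
      rw [← hpow2, hs]
      exact Finset.sum_congr rfl fun i _ => hpow2 _
    have hesq : ‖(WithLp.equiv 2 (Fin n → ℂ)).symm x‖ ^ (2:ℕ)
        = ∑ i ∈ Finset.range n, ‖xe i‖ ^ (2:ℕ) := by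
      rw [EuclideanSpace.norm_eq, Real.sq_sqrt (by positivity)]
      rw [← Fin.sum_univ_eq_sum_range (fun m => ‖xe m‖ ^ (2:ℕ)) n]
      refine Finset.sum_congr rfl fun j _ => ?_
      rw [hxe]
      simp [WithLp.equiv_symm_apply, PiLp.toLp_apply]
    rw [← Real.sqrt_sq (norm_nonneg vx), hvsq, ← hesq, Real.sqrt_sq (norm_nonneg _)]
  have hCnn : (0:ℝ) ≤ C := le_trans (norm_nonneg T) hC
  have key : (WithLp.equiv 2 (Fin n → ℂ)).symm (Hn *ᵥ x)
      = (WithLp.equiv 2 (Fin n → ℂ)).symm (fun j : Fin n => (T vx) (j:ℕ)) := by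
    congr 1
    funext j
    exact (hTvx j).symm
  calc ‖(WithLp.equiv 2 (Fin n → ℂ)).symm (Hn *ᵥ x)‖
      = ‖(WithLp.equiv 2 (Fin n → ℂ)).symm (fun j : Fin n => (T vx) (j:ℕ))‖ := by rw [key]
    _ ≤ ‖T vx‖ := projE_norm_le n (T vx)
    _ ≤ ‖T‖ * ‖vx‖ := T.le_opNorm vx
    _ ≤ C * ‖vx‖ := mul_le_mul_of_nonneg_right hC (norm_nonneg vx)
    _ = C * ‖(WithLp.equiv 2 (Fin n → ℂ)).symm x‖ := by rw [hnorm]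

noncomputable def lpcoord (j : ℕ) : lp (fun _ : ℕ => ℂ) 2 →L[ℂ] ℂ :=
  LinearMap.mkContinuous
    { toFun := fun x => x j
      map_add' := fun x y => by simp [lp.coeFn_add]
      map_smul' := fun c x => by simp [lp.coeFn_smul] }
    1 (fun x => by
      rw [one_mul]; exact lp.norm_apply_le_norm (E := fun _ : ℕ => ℂ) (p := 2) (by norm_num) x j)

@[simp] lemma lpcoord_apply (j : ℕ) (x : lp (fun _ : ℕ => ℂ) 2) : lpcoord j x = x j := rfl

lemma exp_coord (T : lp (fun _ : ℕ => ℂ) 2 →L[ℂ] lp (fun _ : ℕ => ℂ) 2) (t : ℝ) (j : ℕ) :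
    (NormedSpace.exp ((t : ℂ) • T) (lp.single 2 0 1)) j =
      ∑' ℓ : ℕ, ((t ^ ℓ / ℓ.factorial : ℝ) : ℂ) * ((T ^ ℓ) (lp.single 2 0 1)) j := by
  set X := (t : ℂ) • T with hX
  have hsum : Summable (fun ℓ : ℕ => ((ℓ.factorial : ℂ)⁻¹) • X ^ ℓ) :=
    NormedSpace.expSeries_summable' X
  set Φ : (lp (fun _ : ℕ => ℂ) 2 →L[ℂ] lp (fun _ : ℕ => ℂ) 2) →L[ℂ] ℂ :=
    (lpcoord j).comp (ContinuousLinearMap.apply ℂ (lp (fun _ : ℕ => ℂ) 2) (lp.single 2 0 1))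
    with hΦ
  have hΦap : ∀ A : lp (fun _ : ℕ => ℂ) 2 →L[ℂ] lp (fun _ : ℕ => ℂ) 2,
      Φ A = (A (lp.single 2 0 1)) j := fun A => rfl
  have h1 : (NormedSpace.exp X (lp.single 2 0 1)) j = Φ (NormedSpace.exp X) := rfl
  rw [h1, NormedSpace.exp_eq_tsum (𝕂 := ℂ)]
  rw [show (fun x : (lp (fun _ : ℕ => ℂ) 2 →L[ℂ] lp (fun _ : ℕ => ℂ) 2) =>
      ∑' (m : ℕ), ((m.factorial : ℂ)⁻¹) • x ^ m) X
    = ∑' (m : ℕ), ((m.factorial : ℂ)⁻¹) • X ^ m from rfl]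
  rw [Φ.map_tsum hsum]
  refine tsum_congr fun ℓ => ?_
  rw [hΦap]
  have h2 : (((ℓ.factorial : ℂ)⁻¹) • X ^ ℓ) = (((t ^ ℓ / ℓ.factorial : ℝ) : ℂ)) • (T ^ ℓ) := by
    rw [hX, smul_pow, smul_smul]
    congr 1
    push_cast
    field_simp
  rw [h2]
  rw [ContinuousLinearMap.smul_apply, lp.coeFn_smul, Pi.smul_apply, smul_eq_mul]

theorem basis_function_truncation_error
    (T : lp (fun _ : ℕ => ℂ) 2 →L[ℂ] lp (fun _ : ℕ => ℂ) 2)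
    (hHess : ∀ j k : ℕ, j > k + 1 → (T (lp.single 2 k 1)) j = 0)
    (C : ℝ) (hC : ‖T‖ ≤ C)
    (n : ℕ) (Hn : Matrix (Fin n) (Fin n) ℂ)
    (hHn : ∀ j k : Fin n, Hn j k = (T (lp.single 2 (k : ℕ) 1)) (j : ℕ))
    (t : ℝ) (ht : 0 ≤ t) :
    ‖(WithLp.equiv 2 (Fin n → ℂ)).symm (fun j : Fin n =>
        (NormedSpace.exp ((t : ℂ) • T) (lp.single 2 0 1)) (j : ℕ) -
        (∑' ℓ : ℕ, ((t ^ ℓ / ℓ.factorial : ℝ) : ℂ) •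
          ((Hn ^ ℓ) *ᵥ (fun k : Fin n => if (k : ℕ) = 0 then 1 else 0))) j)‖ ≤
      2 * expRemainder n (t * C) ∧
    2 * expRemainder n (t * C) ≤ 2 * (t * C) ^ n / n.factorial * Real.exp (t * C) := by
  classical
  have hC0 : (0:ℝ) ≤ C := le_trans (norm_nonneg T) hC
  set e1 : lp (fun _ : ℕ => ℂ) 2 := lp.single 2 0 1 with he1
  set e1f : Fin n → ℂ := fun k : Fin n => if (k : ℕ) = 0 then 1 else 0 with he1f
  set cc : ℕ → ℂ := fun ℓ => ((t ^ ℓ / ℓ.factorial : ℝ) : ℂ) with hcc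
  set g : ℕ → ℝ := fun ℓ => (t*C) ^ ℓ / ℓ.factorial with hg
  have he1norm : ‖e1‖ = 1 := by
    have := lp.norm_single (E := fun _ : ℕ => ℂ) (p := 2) (by norm_num) 0 (1:ℂ)
    simpa [he1] using this
  have hA : ∀ ℓ : ℕ, ‖(T ^ ℓ) e1‖ ≤ C ^ ℓ := by
    intro ℓ
    induction ℓ with
    | zero => simp [he1norm]
    | succ ℓ ih =>
      rw [pow_succ' T ℓ, ContinuousLinearMap.mul_apply]
      calc ‖T ((T ^ ℓ) e1)‖ ≤ ‖T‖ * ‖(T ^ ℓ) e1‖ := T.le_opNorm _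
        _ ≤ C * C ^ ℓ := mul_le_mul hC ih (norm_nonneg _) hC0
        _ = C ^ (ℓ+1) := (pow_succ' C ℓ).symm
  have hAc : ∀ (ℓ : ℕ) (j : Fin n), ‖((T ^ ℓ) e1) (j:ℕ)‖ ≤ C ^ ℓ := fun ℓ j =>
    le_trans (lp.norm_apply_le_norm (by norm_num) _ _) (hA ℓ)
  have he1fnorm : ‖(WithLp.equiv 2 (Fin n → ℂ)).symm e1f‖ ≤ 1 := by
    rw [EuclideanSpace.norm_eq]
    have hsum : (∑ k : Fin n, ‖(WithLp.equiv 2 (Fin n → ℂ)).symm e1f k‖ ^ 2) ≤ 1 := by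
      have h1 : ∀ k : Fin n, ‖(WithLp.equiv 2 (Fin n → ℂ)).symm e1f k‖ ^ 2
          = if (k:ℕ) = 0 then (1:ℝ) else 0 := by
        intro k; by_cases h : (k:ℕ) = 0 <;>
          simp [he1f, h, WithLp.equiv_symm_apply, PiLp.toLp_apply]
      rw [Finset.sum_congr rfl (fun k _ => h1 k),
        Fin.sum_univ_eq_sum_range (fun m => if m = 0 then (1:ℝ) else 0) n,
        Finset.sum_ite_eq' (Finset.range n) 0 (fun _ => (1:ℝ))]
      split <;> norm_num
    calc Real.sqrt _ ≤ Real.sqrt 1 := Real.sqrt_le_sqrt hsum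
      _ = 1 := Real.sqrt_one
  have hB : ∀ ℓ : ℕ, ‖(WithLp.equiv 2 (Fin n → ℂ)).symm ((Hn ^ ℓ) *ᵥ e1f)‖ ≤ C ^ ℓ := by
    intro ℓ
    induction ℓ with
    | zero => simpa [Matrix.one_mulVec] using he1fnorm
    | succ ℓ ih =>
      rw [pow_succ' Hn ℓ, ← Matrix.mulVec_mulVec]
      calc ‖(WithLp.equiv 2 (Fin n → ℂ)).symm (Hn *ᵥ ((Hn ^ ℓ) *ᵥ e1f))‖
          ≤ C * ‖(WithLp.equiv 2 (Fin n → ℂ)).symm ((Hn ^ ℓ) *ᵥ e1f)‖ :=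
            compress_le T C hC n Hn hHn _
        _ ≤ C * C ^ ℓ := mul_le_mul_of_nonneg_left ih hC0
        _ = C ^ (ℓ+1) := (pow_succ' C ℓ).symm
  have hBc : ∀ (ℓ : ℕ) (j : Fin n), ‖((Hn ^ ℓ) *ᵥ e1f) j‖ ≤ C ^ ℓ := fun ℓ j =>
    le_trans (euclid_coord_le ((WithLp.equiv 2 (Fin n → ℂ)).symm ((Hn ^ ℓ) *ᵥ e1f)) j) (hB ℓ)
  have hccnorm : ∀ ℓ, ‖cc ℓ‖ = t ^ ℓ / ℓ.factorial := by
    intro ℓ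
    simp only [hcc, Complex.norm_real, Real.norm_eq_abs]
    exact abs_of_nonneg (by positivity)
  have hgsum : Summable g := Real.summable_pow_div_factorial (t*C)
  have hbound : ∀ (ℓ : ℕ) (z : ℂ), ‖z‖ ≤ C ^ ℓ → ‖cc ℓ * z‖ ≤ g ℓ := by
    intro ℓ z hz
    rw [norm_mul, hccnorm ℓ]
    calc t ^ ℓ / ℓ.factorial * ‖z‖ ≤ t ^ ℓ / ℓ.factorial * C ^ ℓ :=
        mul_le_mul_of_nonneg_left hz (by positivity)
      _ = g ℓ := by simp only [hg, mul_pow]; ring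
  have hboundv : ∀ (m : ℕ) (P : EuclideanSpace ℂ (Fin n)), ‖P‖ ≤ C ^ m → ‖cc m • P‖ ≤ g m := by
    intro m P hP
    rw [norm_smul, hccnorm m]
    calc t ^ m / m.factorial * ‖P‖ ≤ t ^ m / m.factorial * C ^ m :=
        mul_le_mul_of_nonneg_left hP (by positivity)
      _ = g m := by simp only [hg, mul_pow]; ring
  have hsumA : ∀ j : Fin n, Summable (fun ℓ => cc ℓ * ((T ^ ℓ) e1) (j:ℕ)) := fun j =>
    Summable.of_norm_bounded hgsum (fun ℓ => hbound ℓ _ (hAc ℓ j))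
  have hsumB : ∀ j : Fin n, Summable (fun ℓ => cc ℓ * ((Hn ^ ℓ) *ᵥ e1f) j) := fun j =>
    Summable.of_norm_bounded hgsum (fun ℓ => hbound ℓ _ (hBc ℓ j))
  have hsumBpi : Summable (fun ℓ : ℕ => cc ℓ • ((Hn ^ ℓ) *ᵥ e1f)) := by
    refine Pi.summable.2 fun j => ?_
    simpa using hsumB j
  have hkey := hess_key T hHess n Hn hHn
  have hcoord : ∀ j : Fin n,
      (NormedSpace.exp ((t : ℂ) • T) e1) (j:ℕ)
        - (∑' ℓ : ℕ, cc ℓ • ((Hn ^ ℓ) *ᵥ e1f)) j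
      = ∑' ℓ : ℕ, cc (n+ℓ) * (((T ^ (n+ℓ)) e1) (j:ℕ) - ((Hn ^ (n+ℓ)) *ᵥ e1f) j) := by
    intro j
    have h1 : (∑' ℓ : ℕ, cc ℓ • ((Hn ^ ℓ) *ᵥ e1f)) j
        = ∑' ℓ : ℕ, cc ℓ * ((Hn ^ ℓ) *ᵥ e1f) j := by
      rw [tsum_apply hsumBpi]
      exact tsum_congr fun ℓ => rfl
    rw [exp_coord T t (j:ℕ), h1, ← Summable.tsum_sub (hsumA j) (hsumB j)]
    have hf : ∀ ℓ : ℕ, cc ℓ * ((T ^ ℓ) e1) (j:ℕ) - cc ℓ * ((Hn ^ ℓ) *ᵥ e1f) j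
        = cc ℓ * (((T ^ ℓ) e1) (j:ℕ) - ((Hn ^ ℓ) *ᵥ e1f) j) := fun ℓ => (mul_sub _ _ _).symm
    rw [tsum_congr hf]
    have hsumf : Summable (fun ℓ => cc ℓ * (((T ^ ℓ) e1) (j:ℕ) - ((Hn ^ ℓ) *ᵥ e1f) j)) :=
      ((hsumA j).sub (hsumB j)).congr hf
    have hvan : ∀ ℓ ∈ Finset.range n,
        cc ℓ * (((T ^ ℓ) e1) (j:ℕ) - ((Hn ^ ℓ) *ᵥ e1f) j) = 0 := by
      intro ℓ hℓ
      rw [(hkey ℓ).2 (le_of_lt (Finset.mem_range.1 hℓ)) j, sub_self, mul_zero]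
    rw [← Summable.sum_add_tsum_nat_add n hsumf, Finset.sum_eq_zero hvan, zero_add]
    exact tsum_congr fun ℓ => by rw [add_comm ℓ n]
  set D : ℕ → EuclideanSpace ℂ (Fin n) := fun ℓ =>
    (WithLp.equiv 2 (Fin n → ℂ)).symm
      (fun j : Fin n => cc (n+ℓ) * (((T ^ (n+ℓ)) e1) (j:ℕ) - ((Hn ^ (n+ℓ)) *ᵥ e1f) j)) with hD
  have hDnorm : ∀ ℓ : ℕ, ‖D ℓ‖ ≤ 2 * ((t*C) ^ (n+ℓ) / (n+ℓ).factorial) := by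
    intro ℓ
    have hsplit : D ℓ = cc (n+ℓ) •
          ((WithLp.equiv 2 (Fin n → ℂ)).symm (fun j : Fin n => ((T ^ (n+ℓ)) e1) (j:ℕ)))
        - cc (n+ℓ) • ((WithLp.equiv 2 (Fin n → ℂ)).symm ((Hn ^ (n+ℓ)) *ᵥ e1f)) := by
      ext j
      exact mul_sub _ _ _
    rw [hsplit]
    have h1 := hboundv (n+ℓ) _ (le_trans (projE_norm_le n ((T ^ (n+ℓ)) e1)) (hA (n+ℓ)))
    have h2 := hboundv (n+ℓ) _ (hB (n+ℓ))
    calc ‖_ - _‖ ≤ _ + _ := norm_sub_le _ _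
      _ ≤ g (n+ℓ) + g (n+ℓ) := add_le_add h1 h2
      _ = 2 * ((t*C) ^ (n+ℓ) / (n+ℓ).factorial) := by rw [hg]; ring
  have hgn : Summable (fun ℓ : ℕ => (t*C) ^ (n+ℓ) / (n+ℓ).factorial) :=
    remainder_summable n (t*C)
  have hDn_sum : Summable (fun ℓ => ‖D ℓ‖) :=
    Summable.of_nonneg_of_le (fun _ => norm_nonneg _) hDnorm (hgn.mul_left 2)
  have hDsum : Summable D := hDn_sum.of_norm
  have hεeq : (WithLp.equiv 2 (Fin n → ℂ)).symm (fun j : Fin n =>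
        (NormedSpace.exp ((t : ℂ) • T) e1) (j:ℕ)
          - (∑' ℓ : ℕ, cc ℓ • ((Hn ^ ℓ) *ᵥ e1f)) j)
      = ∑' ℓ : ℕ, D ℓ := by
    ext j
    calc ((WithLp.equiv 2 (Fin n → ℂ)).symm (fun j : Fin n =>
          (NormedSpace.exp ((t : ℂ) • T) e1) (j:ℕ)
            - (∑' ℓ : ℕ, cc ℓ • ((Hn ^ ℓ) *ᵥ e1f)) j)) j
        = (NormedSpace.exp ((t : ℂ) • T) e1) (j:ℕ)
            - (∑' ℓ : ℕ, cc ℓ • ((Hn ^ ℓ) *ᵥ e1f)) j := rfl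
      _ = ∑' ℓ : ℕ, cc (n+ℓ) * (((T ^ (n+ℓ)) e1) (j:ℕ) - ((Hn ^ (n+ℓ)) *ᵥ e1f) j) := hcoord j
      _ = ∑' ℓ : ℕ, (EuclideanSpace.proj j) (D ℓ) := tsum_congr fun ℓ => rfl
      _ = (EuclideanSpace.proj j) (∑' ℓ : ℕ, D ℓ) :=
          ((EuclideanSpace.proj j (𝕜 := ℂ)).map_tsum hDsum).symm
      _ = (∑' ℓ : ℕ, D ℓ) j := rfl
  constructor
  · have hmain : ‖∑' ℓ : ℕ, D ℓ‖ ≤ 2 * expRemainder n (t * C) := by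
      calc ‖∑' ℓ : ℕ, D ℓ‖ ≤ ∑' ℓ : ℕ, ‖D ℓ‖ := norm_tsum_le_tsum_norm hDn_sum
        _ ≤ ∑' ℓ : ℕ, 2 * ((t*C) ^ (n+ℓ) / (n+ℓ).factorial) :=
            Summable.tsum_le_tsum hDnorm hDn_sum (hgn.mul_left 2)
        _ = 2 * expRemainder n (t * C) := tsum_mul_left
    exact le_trans (le_of_eq (congrArg norm hεeq)) hmain
  · have h := remainder_le n (t*C) (mul_nonneg ht hC0)
    calc 2 * expRemainder n (t*C) ≤ 2 * ((t*C) ^ n / n.factorial * Real.exp (t*C)) := by linarith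
      _ = 2 * (t*C) ^ n / n.factorial * Real.exp (t*C) := by ring
end

section
/- Let H_∞ be an infinite upper Hessenberg matrix bounded on ℓ² with ‖H_∞‖₂ ≤ C, and suppose g(s) = Σ_{ℓ=0}^∞ w_ℓ φ_ℓ(s) where (φ_0(t), φ_1(t), ...) = exp(tH_∞)e_1 and the coefficient sequence (w_ℓ) is bounded with Σ|w_ℓ| ≤ ‖W‖₁ < ∞ (or ℓ² bounded ‖W‖₂ < ∞). Then the truncation error e_n = g(s) − Σ_{ℓ=0}^{n-1} w_ℓ φ_ℓ(s) satisfies |e_n| ≤ ‖W‖₂ ‖R_n(sH_∞)e_1‖₂ ≤ ‖W‖₂ R_n(|s|C), and hence e_n → 0 as n → ∞. -/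
/-!
The Hessenberg structure keeps `T ^ i e₁` inside `span {e₀, …, eᵢ}`, so the first `n` Taylor
terms of `exp (sT) e₁` vanish in every coordinate `ℓ ≥ n`. Hence the tail `Σ_{ℓ ≥ n} w_ℓ φ_ℓ(s)`
only sees the vector `R_n(sT) e₁`, and Hölder's inequality gives the first bound; the second is
the termwise estimate `‖(sT)^ℓ / ℓ!‖ ≤ (|s| C)^ℓ / ℓ!`.
-/

open scoped ENNReal
open Finset

namespace lp

section Holder

variable {𝕜 : Type*} [NormedRing 𝕜] [CompleteSpace 𝕜] {p q : ℝ≥0∞}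

theorem summable_apply_mul_apply (hpq : p.toReal.HolderConjugate q.toReal)
    (f : lp (fun _ : ℕ => 𝕜) p) (g : lp (fun _ : ℕ => 𝕜) q) : Summable fun i => f i * g i :=
  (lp.summable_mul hpq f g).of_norm_bounded fun _ => norm_mul_le _ _

theorem norm_tsum_sub_sum_mul_le (hpq : p.toReal.HolderConjugate q.toReal)
    (f : lp (fun _ : ℕ => 𝕜) p) (g h : lp (fun _ : ℕ => 𝕜) q) (n : ℕ)
    (hgh : ∀ i, n ≤ i → g i = h i) :
    ‖∑' i, f i * g i - ∑ i ∈ range n, f i * g i‖ ≤ ‖f‖ * ‖h‖ := by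
  have htail := (hasSum_nat_add_iff' n).2 (summable_apply_mul_apply hpq f g).hasSum
  have hfh := lp.summable_mul hpq f h
  calc ‖∑' i, f i * g i - ∑ i ∈ range n, f i * g i‖
      ≤ ∑' i, ‖f (i + n)‖ * ‖h (i + n)‖ :=
        htail.norm_le_of_bounded ((summable_nat_add_iff n).2 hfh).hasSum fun i => by
          rw [hgh _ (Nat.le_add_left n i)]
          exact norm_mul_le _ _
    _ ≤ ∑' i, ‖f i‖ * ‖h i‖ := by
      rw [← hfh.sum_add_tsum_nat_add n]
      exact le_add_of_nonneg_left (sum_nonneg fun i _ => by positivity)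
    _ ≤ ‖f‖ * ‖h‖ := lp.tsum_mul_le_mul_norm' hpq f h

end Holder

section Hessenberg

variable {𝕜 : Type*} [NormedField 𝕜] {p : ℝ≥0∞}

theorem eq_sum_single_of_apply_eq_zero {m : ℕ} {x : lp (fun _ : ℕ => 𝕜) p}
    (hx : ∀ j, m < j → x j = 0) : x = ∑ k ∈ range (m + 1), lp.single p k (x k) := by
  ext j
  rw [lp.coeFn_sum, Finset.sum_apply]
  simp only [lp.coeFn_single, Finset.sum_pi_single, mem_range]
  split_ifs with hj
  · rfl
  · exact hx j (by omega)

variable [Fact (1 ≤ p)] (T : lp (fun _ : ℕ => 𝕜) p →L[𝕜] lp (fun _ : ℕ => 𝕜) p)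

def IsUpperHessenberg : Prop :=
  ∀ j k : ℕ, j > k + 1 → T (lp.single p k 1) j = 0

variable {T}

theorem IsUpperHessenberg.apply_eq_zero (hT : IsUpperHessenberg T) {m : ℕ}
    {x : lp (fun _ : ℕ => 𝕜) p} (hx : ∀ j, m < j → x j = 0) {j : ℕ} (hj : m + 1 < j) :
    T x j = 0 := by
  rw [eq_sum_single_of_apply_eq_zero hx, map_sum, lp.coeFn_sum, Finset.sum_apply]
  refine sum_eq_zero fun k hk => ?_
  have hk : k + 1 < j := by rw [mem_range] at hk; omega
  rw [← mul_one (x k), ← smul_eq_mul, lp.single_smul, map_smul, lp.coeFn_smul, Pi.smul_apply,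
    hT j k hk, smul_zero]

theorem IsUpperHessenberg.pow_apply_single_zero_eq_zero (hT : IsUpperHessenberg T) {i j : ℕ}
    (hij : i < j) : (T ^ i) (lp.single p 0 1) j = 0 := by
  induction i generalizing j with
  | zero => exact lp.single_apply_ne p 0 1 (by omega)
  | succ i ih =>
    rw [pow_succ']
    exact hT.apply_eq_zero (fun j hj => ih hj) (by omega)

theorem IsUpperHessenberg.sum_smul_pow_apply_single_zero_eq_zero (hT : IsUpperHessenberg T)
    (c : ℕ → 𝕜) {n j : ℕ} (hnj : n ≤ j) :
    (∑ ℓ ∈ range n, c ℓ • T ^ ℓ) (lp.single p 0 1) j = 0 := by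
  rw [_root_.sum_apply, lp.coeFn_sum, Finset.sum_apply]
  refine sum_eq_zero fun ℓ hℓ => ?_
  rw [smul_apply, lp.coeFn_smul, Pi.smul_apply,
    hT.pow_apply_single_zero_eq_zero (by rw [mem_range] at hℓ; omega), smul_zero]

end Hessenberg

theorem norm_two_eq {α : Type*} {E : α → Type*} [∀ i, NormedAddCommGroup (E i)]
    (f : lp E 2) : ‖f‖ = (∑' i, ‖f i‖ ^ 2) ^ (1 / 2 : ℝ) := by
  rw [lp.norm_eq_tsum_rpow (by norm_num) f]
  norm_num

end lp

theorem memℓp_of_summable_norm {α : Type*} {E : α → Type*} [∀ i, NormedAddCommGroup (E i)]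
    {p : ℝ≥0∞} (hp : 1 ≤ p) {f : ∀ i, E i} (hf : Summable fun i => ‖f i‖) : Memℓp f p :=
  (memℓp_gen (by simpa using hf)).of_exponent_ge hp

theorem ContinuousLinearMap.norm_pow_le_pow_norm {𝕜 E : Type*} [NontriviallyNormedField 𝕜]
    [SeminormedAddCommGroup E] [NormedSpace 𝕜 E] (T : E →L[𝕜] E) (m : ℕ) : ‖T ^ m‖ ≤ ‖T‖ ^ m := by
  rcases m with _ | m
  · simpa [ContinuousLinearMap.one_def] using norm_id_le
  · exact norm_pow_le' T m.succ_pos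

theorem hasSum_expRemainder (n : ℕ) (z : ℝ) :
    HasSum (fun k => z ^ (n + k) / (n + k).factorial) (expRemainder n z) := by
  refine Summable.hasSum ?_
  simpa only [add_comm n] using (summable_nat_add_iff n).2 (Real.summable_pow_div_factorial z)

section Exp

variable {𝔸 : Type*} [NormedRing 𝔸] [NormedAlgebra ℂ 𝔸] [CompleteSpace 𝔸]

theorem hasSum_exp_real_smul (a : 𝔸) (t : ℝ) :
    HasSum (fun ℓ => ((t ^ ℓ / ℓ.factorial : ℝ) : ℂ) • a ^ ℓ) (NormedSpace.exp ((t : ℂ) • a)) := by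
  convert NormedSpace.exp_series_hasSum_exp' (𝕂 := ℂ) ((t : ℂ) • a) using 2 with ℓ
  rw [smul_pow, smul_smul]
  push_cast
  ring_nf

theorem norm_exp_real_smul_sub_sum_le {a : 𝔸} {C : ℝ} (ha : ∀ m, ‖a ^ m‖ ≤ C ^ m) (t : ℝ)
    (n : ℕ) :
    ‖NormedSpace.exp ((t : ℂ) • a) - ∑ ℓ ∈ range n, ((t ^ ℓ / ℓ.factorial : ℝ) : ℂ) • a ^ ℓ‖ ≤
      expRemainder n (|t| * C) := by
  refine ((hasSum_nat_add_iff' n).2 (hasSum_exp_real_smul a t)).norm_le_of_bounded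
    (hasSum_expRemainder n _) fun k => ?_
  rw [norm_smul, Complex.norm_real, Real.norm_eq_abs, abs_div, abs_pow, Nat.abs_cast, mul_pow,
    add_comm n k]
  calc |t| ^ (k + n) / (k + n).factorial * ‖a ^ (k + n)‖
      ≤ |t| ^ (k + n) / (k + n).factorial * C ^ (k + n) := by gcongr; exact ha _
    _ = |t| ^ (k + n) * C ^ (k + n) / (k + n).factorial := by ring

end Exp

/-- let `T` be a bounded upper Hessenberg operator on `ℓ²` with `‖T‖ ≤ C`,
basis functions `φ_ℓ(t) = e_{ℓ+1}ᵀ exp(tT) e₁`, and `g(s) = Σ_ℓ w_ℓ φ_ℓ(s)` with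
`Σ_ℓ |w_ℓ| < ∞`.  Then the truncation error `e_n = g(s) - Σ_{ℓ<n} w_ℓ φ_ℓ(s)` satisfies
`|e_n| ≤ ‖W‖₂ ‖R_n(sT)e₁‖₂ ≤ ‖W‖₂ R_n(|s| C)`, and hence `e_n → 0` as `n → ∞`. -/
theorem series_truncation_error
    (T : lp (fun _ : ℕ => ℂ) 2 →L[ℂ] lp (fun _ : ℕ => ℂ) 2)
    (hHess : ∀ j k : ℕ, j > k + 1 → (T (lp.single 2 k 1)) j = 0)
    (C : ℝ) (hC : ‖T‖ ≤ C)
    (w : ℕ → ℂ) (hw : Summable fun ℓ => ‖w ℓ‖)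
    (φ : ℕ → ℝ → ℂ)
    (hφ : ∀ ℓ : ℕ, ∀ t : ℝ, φ ℓ t = (NormedSpace.exp ((t : ℂ) • T) (lp.single 2 0 1)) ℓ)
    (g : ℝ → ℂ) (hg : ∀ t : ℝ, g t = ∑' ℓ : ℕ, w ℓ * φ ℓ t)
    (W2 : ℝ) (hW2 : W2 = (∑' ℓ : ℕ, ‖w ℓ‖ ^ 2) ^ (1 / 2 : ℝ))
    (s : ℝ) :
    (∀ n : ℕ,
      ‖g s - ∑ ℓ ∈ Finset.range n, w ℓ * φ ℓ s‖ ≤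
        W2 * ‖(NormedSpace.exp ((s : ℂ) • T) -
          ∑ ℓ ∈ Finset.range n, ((s ^ ℓ / ℓ.factorial : ℝ) : ℂ) • T ^ ℓ) (lp.single 2 0 1)‖ ∧
      W2 * ‖(NormedSpace.exp ((s : ℂ) • T) -
          ∑ ℓ ∈ Finset.range n, ((s ^ ℓ / ℓ.factorial : ℝ) : ℂ) • T ^ ℓ) (lp.single 2 0 1)‖ ≤
        W2 * expRemainder n (|s| * C)) ∧
    Filter.Tendsto (fun n : ℕ => g s - ∑ ℓ ∈ Finset.range n, w ℓ * φ ℓ s)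
      Filter.atTop (nhds 0) := by
  have hT : lp.IsUpperHessenberg T := hHess
  let u := NormedSpace.exp ((s : ℂ) • T) (lp.single 2 0 1)
  let wv : lp (fun _ : ℕ => ℂ) 2 := ⟨w, memℓp_of_summable_norm one_le_two hw⟩
  have hW2 : W2 = ‖wv‖ := by rw [hW2, lp.norm_two_eq]
  have hconj : (2 : ℝ≥0∞).toReal.HolderConjugate (2 : ℝ≥0∞).toReal := by
    rw [Real.holderConjugate_iff]; norm_num
  have hgs : HasSum (fun ℓ => w ℓ * φ ℓ s) (g s) := by
    simp only [hg, hφ]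
    exact (lp.summable_apply_mul_apply hconj wv u).hasSum
  refine ⟨fun n => ⟨?_, ?_⟩, ?_⟩
  · simp only [hg, hφ, hW2]
    refine lp.norm_tsum_sub_sum_mul_le hconj wv u _ n fun ℓ hℓ => ?_
    rw [sub_apply, lp.coeFn_sub, Pi.sub_apply,
      hT.sum_smul_pow_apply_single_zero_eq_zero _ hℓ, sub_zero]
  · rw [hW2]
    gcongr
    have hpow m : ‖T ^ m‖ ≤ C ^ m :=
      (T.norm_pow_le_pow_norm m).trans (pow_le_pow_left₀ (norm_nonneg T) hC m)
    calc _ ≤ ‖NormedSpace.exp ((s : ℂ) • T) -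
          ∑ ℓ ∈ range n, ((s ^ ℓ / ℓ.factorial : ℝ) : ℂ) • T ^ ℓ‖ * 1 :=
          ContinuousLinearMap.le_opNorm_of_le _ (by simp [lp.norm_single])
      _ ≤ _ := by rw [mul_one]; exact norm_exp_real_smul_sub_sum_le hpow s n
  · simpa using (tendsto_const_nhds (x := g s)).sub hgs.tendsto_sum_nat
end

section
/- Let H_∞ be an infinite upper Hessenberg matrix bounded on ℓ², H_n its leading n×n principal submatrix, and suppose g is analytic at 0 with g(s) = Σ_ℓ w_ℓ φ_ℓ(s) where (φ_ℓ(t))_ℓ = exp(tH_∞)e_1 and Σ|w_ℓ| < ∞. Then for every ℓ < n, g^{(ℓ)}(0) = W_∞ H_∞^ℓ e_1 = W_n H_n^ℓ e_1, where W_n = (w_0, ..., w_{n-1}) is a row vector. Consequently, if all subdiagonal entries of H_n are nonzero, then W_n = G_n K_n(H_n, e_1)^{-1}, where G_n = (g(0), g'(0), ..., g^{(n-1)}(0)) and K_n(H_n, e_1) = [e_1, H_n e_1, ..., H_n^{n-1} e_1]. -/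
open scoped Matrix
open NormedSpace

set_option maxHeartbeats 1000000

/-- Coordinate evaluation on `ℓ²` as a continuous linear map. -/
noncomputable def evalCLM (m : ℕ) : lp (fun _ : ℕ => ℂ) 2 →L[ℂ] ℂ :=
  LinearMap.mkContinuous
    { toFun := fun f => f m
      map_add' := fun _ _ => rfl
      map_smul' := fun _ _ => rfl } 1
    (fun f => by
      rw [one_mul]; exact lp.norm_apply_le_norm (by norm_num) f m)

/-- let `T` be a bounded upper Hessenberg operator on `ℓ²`, `Hn` its
leading `n×n` principal submatrix, `φ_ℓ(t) = e_{ℓ+1}ᵀ exp(tT) e₁`, and suppose `g`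
is analytic at `0` with `g(s) = Σ_ℓ w_ℓ φ_ℓ(s)`, `Σ_ℓ |w_ℓ| < ∞`, where the expansion
may be differentiated termwise at `0`.  Then for every `ℓ < n`,
`g^{(ℓ)}(0) = W∞ T^ℓ e₁ = Wn Hn^ℓ e₁`; consequently, if all subdiagonal entries of
`Hn` are nonzero, then `Wn = Gn K_n(Hn, e₁)⁻¹` where `Gn = (g(0), …, g^{(n-1)}(0))`
and `K_n(Hn, e₁) = [e₁, Hn e₁, …, Hn^{n-1} e₁]`. -/
theorem coefficients_from_derivatives
    (T : lp (fun _ : ℕ => ℂ) 2 →L[ℂ] lp (fun _ : ℕ => ℂ) 2)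
    (hHess : ∀ j k : ℕ, j > k + 1 → (T (lp.single 2 k 1)) j = 0)
    (n : ℕ) (Hn : Matrix (Fin n) (Fin n) ℂ)
    (hHn : ∀ j k : Fin n, Hn j k = (T (lp.single 2 (k : ℕ) 1)) (j : ℕ))
    (w : ℕ → ℂ) (hw : Summable fun ℓ => ‖w ℓ‖)
    (φ : ℕ → ℝ → ℂ)
    (hφ : ∀ ℓ : ℕ, ∀ t : ℝ, φ ℓ t = (NormedSpace.exp ((t : ℂ) • T) (lp.single 2 0 1)) ℓ)
    (g : ℝ → ℂ) (hga : AnalyticAt ℝ g 0)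
    (hg : ∀ s : ℝ, g s = ∑' ℓ : ℕ, w ℓ * φ ℓ s)
    (hterm : ∀ j : ℕ, iteratedDeriv j g 0 = ∑' ℓ : ℕ, w ℓ * iteratedDeriv j (φ ℓ) 0) :
    (∀ ℓ : ℕ, ℓ < n →
      iteratedDeriv ℓ g 0 = ∑' i : ℕ, w i * ((T ^ ℓ) (lp.single 2 0 1)) i ∧
      iteratedDeriv ℓ g 0 =
        ∑ i : Fin n, w i * ((Hn ^ ℓ) *ᵥ (fun k : Fin n => if (k : ℕ) = 0 then 1 else 0)) i) ∧
    ((∀ i j : Fin n, (i : ℕ) = (j : ℕ) + 1 → Hn i j ≠ 0) →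
      (Matrix.of fun (_ : Fin 1) (i : Fin n) => w i) =
        (Matrix.of fun (_ : Fin 1) (i : Fin n) => iteratedDeriv (i : ℕ) g 0) *
          (Matrix.of fun (i j : Fin n) =>
            ((Hn ^ (j : ℕ)) *ᵥ (fun k : Fin n => if (k : ℕ) = 0 then 1 else 0)) i)⁻¹) := by
  classical
  set e₁ : lp (fun _ : ℕ => ℂ) 2 := lp.single 2 0 1 with he₁
  -- action of `T` on a finitely supported vector
  have hstep : ∀ (N : ℕ) (v : lp (fun _ : ℕ => ℂ) 2), (∀ j, N ≤ j → v j = 0) →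
      ∀ i, (T v) i = ∑ k ∈ Finset.range N, v k * (T (lp.single 2 k 1)) i := by
    intro N v hv i
    have hrep : v = ∑ k ∈ Finset.range N, v k • lp.single 2 k 1 := by
      apply lp.ext
      funext j
      rw [lp.coeFn_sum]
      simp only [Finset.sum_apply, lp.coeFn_smul, Pi.smul_apply, smul_eq_mul]
      by_cases hj : j < N
      · rw [Finset.sum_eq_single_of_mem j (Finset.mem_range.mpr hj)
          (fun k _ hkj => by rw [lp.single_apply_ne 2 k 1 (Ne.symm hkj), mul_zero])]
        rw [lp.single_apply_self, mul_one]
      · rw [hv j (le_of_not_gt hj)]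
        refine (Finset.sum_eq_zero fun k hk => ?_).symm
        rw [lp.single_apply_ne 2 k 1
          (fun h => hj (by rw [h]; exact Finset.mem_range.mp hk)), mul_zero]
    conv_lhs => rw [hrep, map_sum]
    simp only [lp.coeFn_sum, Finset.sum_apply, map_smul, lp.coeFn_smul,
      Pi.smul_apply, smul_eq_mul]
  -- vanishing of coordinates of `T^ℓ e₁` below the diagonal
  have hL1 : ∀ ℓ j : ℕ, ℓ < j → ((T ^ ℓ) e₁) j = 0 := by
    intro ℓ
    induction ℓ with
    | zero =>
      intro j hj
      rw [pow_zero, ContinuousLinearMap.one_apply, he₁,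
        lp.single_apply_ne 2 0 1 (by omega : j ≠ 0)]
    | succ ℓ ih =>
      intro j hj
      rw [pow_succ', ContinuousLinearMap.mul_apply,
        hstep (ℓ + 1) _ (fun k hk => ih k (by omega))]
      refine Finset.sum_eq_zero fun k hk => ?_
      rw [hHess j k (by have := Finset.mem_range.mp hk; omega), mul_zero]
  -- coordinate recursion
  have hrec : ∀ ℓ i : ℕ, ((T ^ (ℓ + 1)) e₁) i =
      ∑ k ∈ Finset.range (ℓ + 1), ((T ^ ℓ) e₁) k * (T (lp.single 2 k 1)) i := by
    intro ℓ i
    rw [pow_succ', ContinuousLinearMap.mul_apply]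
    exact hstep (ℓ + 1) _ (fun k hk => hL1 ℓ k (by omega)) i
  set e1f : Fin n → ℂ := fun k : Fin n => if (k : ℕ) = 0 then 1 else 0 with he1f
  -- finite section agreement
  have hfin : ∀ ℓ : ℕ, ℓ < n → ∀ i : Fin n,
      ((Hn ^ ℓ) *ᵥ e1f) i = ((T ^ ℓ) e₁) (i : ℕ) := by
    intro ℓ
    induction ℓ with
    | zero =>
      intro _ i
      rw [pow_zero, Matrix.one_mulVec, pow_zero, ContinuousLinearMap.one_apply]
      simp only [he1f, he₁]
      by_cases h : (i : ℕ) = 0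
      · rw [if_pos h, h, lp.single_apply_self]
      · rw [if_neg h, lp.single_apply_ne 2 0 1 h]
    | succ ℓ ih =>
      intro hℓ i
      have hℓn : ℓ < n := by omega
      have hmv : (Hn ^ (ℓ + 1)) *ᵥ e1f = Hn *ᵥ ((Hn ^ ℓ) *ᵥ e1f) := by
        rw [Matrix.mulVec_mulVec, ← pow_succ']
      rw [hmv, hrec]
      have lhs_eq : (Hn *ᵥ ((Hn ^ ℓ) *ᵥ e1f)) i =
          ∑ k : Fin n, Hn i k * ((Hn ^ ℓ) *ᵥ e1f) k := rfl
      rw [lhs_eq]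
      have step1 : ∑ k : Fin n, Hn i k * ((Hn ^ ℓ) *ᵥ e1f) k =
          ∑ k : Fin n, ((T ^ ℓ) e₁) (k : ℕ) * (T (lp.single 2 (k : ℕ) 1)) (i : ℕ) :=
        Finset.sum_congr rfl fun k _ => by rw [hHn i k, ih hℓn k, mul_comm]
      rw [step1, Fin.sum_univ_eq_sum_range
        (fun k => ((T ^ ℓ) e₁) k * (T (lp.single 2 k 1)) (i : ℕ))]
      refine (Finset.sum_subset (Finset.range_subset_range.mpr (by omega))
        fun k _ hk => ?_).symm
      rw [hL1 ℓ k (by have := Finset.mem_range.not.mp hk; omega), zero_mul]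
  -- the evaluation functional
  set L : ℕ → ((lp (fun _ : ℕ => ℂ) 2 →L[ℂ] lp (fun _ : ℕ => ℂ) 2) →L[ℝ] ℂ) :=
    fun m => ((evalCLM m).comp
      (ContinuousLinearMap.apply ℂ (lp (fun _ : ℕ => ℂ) 2) e₁)).restrictScalars ℝ with hL
  have hLval : ∀ (m : ℕ) (S : lp (fun _ : ℕ => ℂ) 2 →L[ℂ] lp (fun _ : ℕ => ℂ) 2),
      L m S = (S e₁) m := fun _ _ => rfl
  have hφL : ∀ m : ℕ, φ m = fun t : ℝ => L m (exp (t • T)) := by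
    intro m
    funext t
    rw [hφ m t, hLval]
    congr 2
  -- iterated derivatives of the matrix exponential composed with `L m`
  have hkey : ∀ (j m : ℕ), iteratedDeriv j (fun t : ℝ => L m (exp (t • T))) =
      fun t : ℝ => L m (exp (t • T) * T ^ j) := by
    intro j
    induction j with
    | zero =>
      intro m
      rw [iteratedDeriv_zero]
      simp only [pow_zero, mul_one]
    | succ j ih =>
      intro m
      rw [iteratedDeriv_succ, ih m]
      funext t
      have h1 : HasDerivAt (fun u : ℝ => exp (u • T)) (exp (t • T) * T) t :=
        hasDerivAt_exp_smul_const T t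
      have h2 := h1.mul_const (T ^ j)
      have h3 := (L m).hasFDerivAt.comp_hasDerivAt t h2
      rw [mul_assoc, ← pow_succ'] at h3
      exact h3.deriv
  have hφd : ∀ m j : ℕ, iteratedDeriv j (φ m) 0 = ((T ^ j) e₁) m := by
    intro m j
    rw [hφL m, hkey j m]
    simp only [zero_smul, exp_zero, one_mul]
    exact hLval m (T ^ j)
  -- part 1
  have hpart1 : ∀ ℓ : ℕ, ℓ < n →
      iteratedDeriv ℓ g 0 = ∑' i : ℕ, w i * ((T ^ ℓ) e₁) i ∧
      iteratedDeriv ℓ g 0 = ∑ i : Fin n, w i * ((Hn ^ ℓ) *ᵥ e1f) i := by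
    intro ℓ hℓ
    have h1 : iteratedDeriv ℓ g 0 = ∑' i : ℕ, w i * ((T ^ ℓ) e₁) i := by
      rw [hterm ℓ]
      exact tsum_congr fun i => by rw [hφd i ℓ]
    refine ⟨h1, ?_⟩
    rw [h1, tsum_eq_sum (s := Finset.range n) (fun i hi => by
      rw [hL1 ℓ i (by have := Finset.mem_range.not.mp hi; omega), mul_zero])]
    rw [← Fin.sum_univ_eq_sum_range (fun i => w i * ((T ^ ℓ) e₁) i)]
    exact Finset.sum_congr rfl fun i _ => by rw [hfin ℓ hℓ i]
  refine ⟨hpart1, ?_⟩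
  -- part 2
  intro hsub
  set K : Matrix (Fin n) (Fin n) ℂ :=
    Matrix.of fun (i j : Fin n) => ((Hn ^ (j : ℕ)) *ᵥ e1f) i with hK
  have hKT : ∀ i j : Fin n, K i j = ((T ^ (j : ℕ)) e₁) (i : ℕ) :=
    fun i j => hfin (j : ℕ) j.isLt i
  have hKtri : K.BlockTriangular id := by
    intro i j hji
    rw [hKT]
    exact hL1 _ _ hji
  have hdiagT : ∀ m : ℕ, m < n → ((T ^ m) e₁) m ≠ 0 := by
    intro m
    induction m with
    | zero =>
      intro _
      rw [pow_zero, ContinuousLinearMap.one_apply, he₁, lp.single_apply_self]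
      exact one_ne_zero
    | succ m ih =>
      intro hm
      rw [hrec m (m + 1)]
      rw [Finset.sum_eq_single m
        (fun k hk hkm => by
          rw [hHess (m + 1) k (by have := Finset.mem_range.mp hk; omega), mul_zero])
        (fun h => absurd (Finset.self_mem_range_succ m) h)]
      refine mul_ne_zero (ih (by omega)) ?_
      have hne := hsub ⟨m + 1, hm⟩ ⟨m, by omega⟩ rfl
      rwa [hHn] at hne
  have hdet : K.det ≠ 0 := by
    rw [Matrix.det_of_upperTriangular hKtri]
    refine Finset.prod_ne_zero_iff.mpr fun j _ => ?_
    rw [hKT]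
    exact hdiagT (j : ℕ) j.isLt
  have hGWK : (Matrix.of fun (_ : Fin 1) (i : Fin n) => iteratedDeriv (i : ℕ) g 0) =
      (Matrix.of fun (_ : Fin 1) (i : Fin n) => w i) * K := by
    ext i j
    rw [Matrix.mul_apply]
    simp only [Matrix.of_apply]
    exact (hpart1 (j : ℕ) j.isLt).2
  rw [hGWK, Matrix.mul_assoc, Matrix.mul_nonsing_inv K (isUnit_iff_ne_zero.mpr hdet),
    Matrix.mul_one]
end
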